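/- Let m > 0, E ∈ ℝ, V : ℝ → ℝ, and let f : ℝ → ℝ be continuously differentiable with f′(ψ)² + f(ψ)² = 2m(E − V(ψ)) for all ψ (the ordinary differential equation (13) of the paper). Define S(R,ψ) = R f(ψ) − ∫₀^ψ l(t) f′(t) dt. Then for every (R,ψ) with R ≠ l(ψ), S satisfies the Hamilton–Jacobi equation (11): (1/(2m))·[(∂S/∂R(R,ψ))² + (R − l(ψ))⁻² (∂S/∂ψ(R,ψ))²] + V(ψ) = E. -/

import Mathlib

/-! The two partial derivatives are `∂S/∂R = f(ψ)` and `∂S/∂ψ = (R − l(ψ)) f′(ψ)`, so the ODE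
`f′² + f² = 2m(E − V)` is exactly the Hamilton–Jacobi equation once the factor `(R − l(ψ))²`
cancels. -/

open Real

/-- The separated solution `S(R,ψ) = R f(ψ) − ∫₀^ψ l(t) f′(t) dt` of the paper. -/
noncomputable def S (l f : ℝ → ℝ) (R ψ : ℝ) : ℝ :=
  R * f ψ - ∫ t in (0:ℝ)..ψ, l t * deriv f t

theorem hasDerivAt_S_fst (l f : ℝ → ℝ) (R ψ : ℝ) :
    HasDerivAt (fun r => S l f r ψ) (f ψ) R := by
  simpa only [S, one_mul] using ((hasDerivAt_id' R).mul_const (f ψ)).sub_const _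

theorem hasDerivAt_S_snd {l f : ℝ → ℝ} (hl : Continuous l) (hf : ContDiff ℝ 1 f) (R ψ : ℝ) :
    HasDerivAt (fun p => S l f R p) ((R - l ψ) * deriv f ψ) ψ := by
  have hlf' : Continuous fun t => l t * deriv f t := hl.mul (hf.continuous_deriv le_rfl)
  have hf' : HasDerivAt f (deriv f ψ) ψ := (hf.differentiable one_ne_zero ψ).hasDerivAt
  have hint : HasDerivAt (fun p => ∫ t in (0:ℝ)..p, l t * deriv f t) (l ψ * deriv f ψ) ψ :=
    intervalIntegral.integral_hasDerivAt_right (hlf'.intervalIntegrable 0 ψ)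
      (hlf'.stronglyMeasurableAtFilter _ _) hlf'.continuousAt
  rw [sub_mul]
  exact (hf'.const_mul R).sub hint

/-- If `f` solves the ordinary differential equation (13), `f′² + f² = 2m(E − V)`,
then `S` solves the Hamilton–Jacobi equation (11) in the metric
`dR² + (R − l(ψ))² dψ²`. -/
theorem stmt_15 (l : ℝ → ℝ) (hl : Continuous l) (m E : ℝ) (hm : 0 < m)
    (V : ℝ → ℝ) (f : ℝ → ℝ) (hf : ContDiff ℝ 1 f)
    (hODE : ∀ ψ : ℝ, (deriv f ψ) ^ 2 + (f ψ) ^ 2 = 2 * m * (E - V ψ))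
    (R ψ : ℝ) (h : R ≠ l ψ) :
    1 / (2 * m) * ((deriv (fun r => S l f r ψ) R) ^ 2 +
        (deriv (fun p => S l f R p) ψ) ^ 2 / (R - l ψ) ^ 2) + V ψ = E := by
  have hRl : R - l ψ ≠ 0 := sub_ne_zero.mpr h
  rw [(hasDerivAt_S_fst l f R ψ).deriv, (hasDerivAt_S_snd hl hf R ψ).deriv, mul_pow,
    mul_div_cancel_left₀ _ (pow_ne_zero 2 hRl), add_comm (f ψ ^ 2), hODE ψ]
  field_simp
  ring
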